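/- arXiv:2302.01246 — 3 statements merged into one kernel-verified Lean document; each statement's English description precedes it below -/
import Mathlib

section
/- In a crossover trial under simple randomization with no carry-over effect, the conditional expectation of Y1 - Y2 given A = 1 equals θ1 - τ, and the conditional expectation of Y2 - Y1 given A = 0 equals θ2 + τ, where θt = E(Yt^(1) - Yt^(0)) and τ = E(Y2^(0) - Y1^(0)). Consequently E[½((Y1-Y2)·1{A=1}/π1 + (Y2-Y1)·1{A=0}/π0)] = (θ1+θ2)/2. -/
/-!
On the event `{A = a}` the observed difference `Y1 - Y2` is a fixed difference of potential
outcomes, and since `A` is independent of the potential outcomes, integrating such a difference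
over `{A = a}` only scales its mean by `P(A = a)`. Dividing by `P(A = a)` gives the two
conditional means, and the inverse-probability weights turn the last integral into their average.
-/

open MeasureTheory ProbabilityTheory

namespace ProbabilityTheory

variable {Ω : Type*} [MeasurableSpace Ω] {μ : Measure Ω}

theorem IndepFun.setIntegral_preimage_eq_measureReal_mul_integral {β : Type*}
    [MeasurableSpace β] {A : Ω → β} {X : Ω → ℝ} (hAX : IndepFun A X μ) (hA : Measurable A)
    (hX : AEStronglyMeasurable X μ) {S : Set β} (hS : MeasurableSet S) :
    ∫ ω in A ⁻¹' S, X ω ∂μ = μ.real (A ⁻¹' S) * ∫ ω, X ω ∂μ := by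
  have hφ : Measurable (S.indicator fun _ => (1 : ℝ)) := measurable_const.indicator hS
  have hφA : S.indicator (fun _ => (1 : ℝ)) ∘ A = (A ⁻¹' S).indicator (fun _ => 1) :=
    funext fun _ => (Set.indicator_comp_right (g := fun _ => (1 : ℝ)) A).symm
  have hφX : IndepFun ((A ⁻¹' S).indicator fun _ => (1 : ℝ)) X μ :=
    hφA ▸ hAX.comp hφ measurable_id
  calc ∫ ω in A ⁻¹' S, X ω ∂μ
      = ∫ ω, (A ⁻¹' S).indicator (fun _ => (1 : ℝ)) ω * X ω ∂μ := by
        simp_rw [← Set.indicator_mul_left, one_mul, integral_indicator (hA hS)]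
    _ = μ.real (A ⁻¹' S) * ∫ ω, X ω ∂μ := by
        rw [hφX.integral_fun_mul_eq_mul_integral
            (hφA ▸ (hφ.comp hA).aestronglyMeasurable) hX,
          integral_indicator_const _ (hA hS), smul_eq_mul, mul_one]

theorem measureReal_setOf_eq_zero_eq_one_sub [IsProbabilityMeasure μ] {A : Ω → ℝ}
    (hA : Measurable A) (hAb : ∀ ω, A ω = 0 ∨ A ω = 1) :
    μ.real {ω | A ω = 0} = 1 - μ.real {ω | A ω = 1} := by
  have hcompl : {ω | A ω = 0} = {ω | A ω = 1}ᶜ := by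
    ext ω
    rcases hAb ω with h | h <;> simp [h]
  rw [hcompl]
  exact probReal_compl_eq_one_sub (hA (measurableSet_singleton 1))

theorem integral_cond_eq_inv_mul_setIntegral (s : Set Ω) (f : Ω → ℝ) :
    ∫ ω, f ω ∂μ[|s] = (μ.real s)⁻¹ * ∫ ω in s, f ω ∂μ := by
  rw [cond, integral_smul_measure, ENNReal.toReal_inv, smul_eq_mul, measureReal_def]

end ProbabilityTheory

section InverseProbabilityWeighting

variable {Ω : Type*} [MeasurableSpace Ω] {μ : Measure Ω} {s : Set Ω} {f : Ω → ℝ}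

theorem integral_mul_indicator_one_div (hs : MeasurableSet s) (c : ℝ) :
    ∫ ω, f ω * s.indicator (fun _ => (1 : ℝ)) ω / c ∂μ = (∫ ω in s, f ω ∂μ) / c := by
  simp_rw [← Set.indicator_mul_right (f := f), mul_one]
  rw [integral_div, integral_indicator hs]

theorem MeasureTheory.IntegrableOn.integrable_mul_indicator_one_div (hf : IntegrableOn f s μ)
    (hs : MeasurableSet s) (c : ℝ) :
    Integrable (fun ω => f ω * s.indicator (fun _ => (1 : ℝ)) ω / c) μ := by
  simp_rw [← Set.indicator_mul_right (f := f), mul_one]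
  exact (hf.integrable_indicator hs).div_const c

end InverseProbabilityWeighting

/-- In a crossover trial under simple randomization with no
carry-over effect, E(Y1 - Y2 | A=1) = θ1 - τ and E(Y2 - Y1 | A=0) = θ2 + τ,
and E[½((Y1-Y2)·1{A=1}/π1 + (Y2-Y1)·1{A=0}/π0)] = (θ1+θ2)/2. -/
theorem stmt_3 {Ω : Type*} [MeasurableSpace Ω] (μ : Measure Ω) [IsProbabilityMeasure μ]
    (A Y10 Y11 Y20 Y21 Y1 Y2 : Ω → ℝ)
    (hAm : Measurable A) (hAb : ∀ ω, A ω = 0 ∨ A ω = 1)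
    (π1 π0 : ℝ) (hπ1 : π1 ∈ Set.Ioo (0 : ℝ) 1) (hπ0 : π0 = 1 - π1)
    (hA1 : μ {ω | A ω = 1} = ENNReal.ofReal π1)
    (hindep : IndepFun A (fun ω => (Y10 ω, Y11 ω, Y20 ω, Y21 ω)) μ)
    (hY10 : Integrable Y10 μ) (hY11 : Integrable Y11 μ)
    (hY20 : Integrable Y20 μ) (hY21 : Integrable Y21 μ)
    (hcons1 : ∀ ω, A ω = 1 → Y1 ω = Y11 ω ∧ Y2 ω = Y20 ω)
    (hcons0 : ∀ ω, A ω = 0 → Y1 ω = Y10 ω ∧ Y2 ω = Y21 ω)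
    (θ1 θ2 τ : ℝ)
    (hθ1 : θ1 = ∫ ω, (Y11 ω - Y10 ω) ∂μ)
    (hθ2 : θ2 = ∫ ω, (Y21 ω - Y20 ω) ∂μ)
    (hτ : τ = ∫ ω, (Y20 ω - Y10 ω) ∂μ) :
    (∫ ω, (Y1 ω - Y2 ω) ∂(μ[|{ω | A ω = 1}])) = θ1 - τ
    ∧ (∫ ω, (Y2 ω - Y1 ω) ∂(μ[|{ω | A ω = 0}])) = θ2 + τ
    ∧ (∫ ω, (1 / 2) * ((Y1 ω - Y2 ω) * Set.indicator {ω' | A ω' = 1} (fun _ => (1 : ℝ)) ω / π1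
          + (Y2 ω - Y1 ω) * Set.indicator {ω' | A ω' = 0} (fun _ => (1 : ℝ)) ω / π0) ∂μ)
        = (θ1 + θ2) / 2 := by
  obtain ⟨hπ1pos, hπ1lt⟩ := hπ1
  have hπ0pos : 0 < π0 := by linarith
  set s1 := {ω | A ω = 1}
  set s0 := {ω | A ω = 0}
  have hs1 : MeasurableSet s1 := hAm (measurableSet_singleton 1)
  have hs0 : MeasurableSet s0 := hAm (measurableSet_singleton 0)
  have hμs1 : μ.real s1 = π1 := by rw [measureReal_def, hA1, ENNReal.toReal_ofReal hπ1pos.le]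
  have hμs0 : μ.real s0 = π0 := by
    rw [measureReal_setOf_eq_zero_eq_one_sub hAm hAb, hμs1, hπ0]
  have hsplit : ∀ (c : ℝ) (f : ℝ × ℝ × ℝ × ℝ → ℝ), Measurable f →
      Integrable (fun ω => f (Y10 ω, Y11 ω, Y20 ω, Y21 ω)) μ →
      ∫ ω in {ω | A ω = c}, f (Y10 ω, Y11 ω, Y20 ω, Y21 ω) ∂μ
        = μ.real {ω | A ω = c} * ∫ ω, f (Y10 ω, Y11 ω, Y20 ω, Y21 ω) ∂μ :=
    fun c _ hf hint =>
      (hindep.comp measurable_id hf).setIntegral_preimage_eq_measureReal_mul_integral hAm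
        hint.aestronglyMeasurable (measurableSet_singleton c)
  have heq1 : Set.EqOn (fun ω => Y1 ω - Y2 ω) (fun ω => Y11 ω - Y20 ω) s1 :=
    fun ω hω => by simp [hcons1 ω hω]
  have heq0 : Set.EqOn (fun ω => Y2 ω - Y1 ω) (fun ω => Y21 ω - Y10 ω) s0 :=
    fun ω hω => by simp [hcons0 ω hω]
  have h1 : ∫ ω in s1, (Y1 ω - Y2 ω) ∂μ = π1 * (θ1 - τ) := by
    rw [setIntegral_congr_fun hs1 heq1,
      hsplit 1 (fun p => p.2.1 - p.2.2.1) (by fun_prop) (hY11.sub hY20), hμs1, hθ1, hτ,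
      integral_sub hY11 hY20, integral_sub hY11 hY10, integral_sub hY20 hY10]
    ring
  have h0 : ∫ ω in s0, (Y2 ω - Y1 ω) ∂μ = π0 * (θ2 + τ) := by
    rw [setIntegral_congr_fun hs0 heq0,
      hsplit 0 (fun p => p.2.2.2 - p.1) (by fun_prop) (hY21.sub hY10), hμs0, hθ2, hτ,
      integral_sub hY21 hY10, integral_sub hY21 hY20, integral_sub hY20 hY10]
    ring
  have hi1 : IntegrableOn (fun ω => Y1 ω - Y2 ω) s1 μ :=
    (hY11.sub hY20).integrableOn.congr_fun heq1.symm hs1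
  have hi0 : IntegrableOn (fun ω => Y2 ω - Y1 ω) s0 μ :=
    (hY21.sub hY10).integrableOn.congr_fun heq0.symm hs0
  refine ⟨?_, ?_, ?_⟩
  · rw [integral_cond_eq_inv_mul_setIntegral, hμs1, h1]
    field_simp
  · rw [integral_cond_eq_inv_mul_setIntegral, hμs0, h0]
    field_simp
  · rw [integral_const_mul, integral_add (hi1.integrable_mul_indicator_one_div hs1 π1)
      (hi0.integrable_mul_indicator_one_div hs0 π0), integral_mul_indicator_one_div hs1,
      integral_mul_indicator_one_div hs0, h1, h0]
    field_simp
    ring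
end

section
/- Let θ_Alt > 0, 0 ≤ λ0 + λ1 < 2θ_Alt, and σ̃_cr, σ_pr > 0. Define ñ_cr = (z_{1-α}+z_{1-β})² σ̃_cr² / (θ_Alt - ½(λ0+λ1))² and n_pr = (z_{1-α}+z_{1-β})² σ_pr² / θ_Alt². Then ñ_cr < n_pr if and only if ½(λ0+λ1)/θ_Alt < 1 - σ̃_cr/σ_pr. -/
/-- With θ_Alt > 0, 0 ≤ λ0+λ1 < 2θ_Alt, σ̃_cr, σ_pr > 0, and
ñ_cr = (z_{1-α}+z_{1-β})² σ̃_cr² / (θ_Alt - ½(λ0+λ1))²,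
n_pr = (z_{1-α}+z_{1-β})² σ_pr² / θ_Alt², we have
ñ_cr < n_pr ↔ ½(λ0+λ1)/θ_Alt < 1 - σ̃_cr/σ_pr. -/
theorem stmt_9 (θAlt l0 l1 σcr σpr za zb ncr npr : ℝ)
    (hθ : 0 < θAlt) (hl : 0 ≤ l0 + l1) (hl2 : l0 + l1 < 2 * θAlt)
    (hσcr : 0 < σcr) (hσpr : 0 < σpr) (hza : 0 < za) (hzb : 0 < zb)
    (hncr : ncr = (za + zb) ^ 2 * σcr ^ 2 / (θAlt - (l0 + l1) / 2) ^ 2)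
    (hnpr : npr = (za + zb) ^ 2 * σpr ^ 2 / θAlt ^ 2) :
    ncr < npr ↔ (l0 + l1) / 2 / θAlt < 1 - σcr / σpr := by
  subst hncr hnpr
  have hd : 0 < θAlt - (l0 + l1) / 2 := by linarith
  have hz : 0 < za + zb := by linarith
  have key : σcr * θAlt < (θAlt - (l0 + l1) / 2) * σpr ↔
      (l0 + l1) / 2 / θAlt < 1 - σcr / σpr := by
    rw [show (1 : ℝ) - σcr / σpr = (σpr - σcr) / σpr by field_simp,
      div_lt_div_iff₀ hθ hσpr]
    constructor <;> intro h <;> nlinarith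
  rw [← key, div_lt_div_iff₀ (by positivity) (by positivity)]
  constructor <;> intro h
  · have h2 : (σcr * θAlt) ^ 2 < ((θAlt - (l0 + l1) / 2) * σpr) ^ 2 := by
      have hz2 : 0 < (za + zb) ^ 2 := by positivity
      nlinarith
    exact lt_of_pow_lt_pow_left₀ 2 (le_of_lt (mul_pos hd hσpr)) h2
  · have h2 : (σcr * θAlt) ^ 2 < ((θAlt - (l0 + l1) / 2) * σpr) ^ 2 :=
      pow_lt_pow_left₀ h (le_of_lt (mul_pos hσcr hθ)) two_ne_zero
    nlinarith [mul_lt_mul_of_pos_left h2 (show (0:ℝ) < (za + zb) ^ 2 by positivity)]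
end

section
/- Let Σ be a positive semidefinite p×p matrix, π1 ∈ (0,1), π0 = 1-π1, and β0, β1 ∈ R^p. Define σ̃²_cr,adj - σ̃²_cr = (1/(4π1))[Var(U1 - β1ᵀX) - Var(U1)] + (1/(4π0))[Var(U0 - β0ᵀX) - Var(U0)] + ¼(β1-β0)ᵀΣ(β1-β0), where βa = Σ^{-1}Cov(X, Ua) and Σ = Var(X). Then σ̃²_cr,adj - σ̃²_cr = -(1/(4π1π0))(π0β1 + π1β0)ᵀΣ(π0β1 + π1β0) ≤ 0. -/
open MeasureTheory ProbabilityTheory Matrix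

/-- Covariance of two real random variables. -/
noncomputable def cov {Ω : Type*} [MeasurableSpace Ω] (μ : Measure Ω) (f g : Ω → ℝ) : ℝ :=
  (∫ ω, f ω * g ω ∂μ) - (∫ ω, f ω ∂μ) * ∫ ω, g ω ∂μ

/-!
Since `Σ β_a = Cov(X, U_a)`, expanding the variance gives
`Var(U_a - β_aᵀX) = Var(U_a) - β_aᵀΣβ_a`: adjustment removes exactly the variance explained by the
regression. With `q v = vᵀΣv`, the difference of the two asymptotic variances becomes a combination
of `q β1`, `q β0` and `q (β1 - β0)`, and for any symmetric `Σ` and `π0 + π1 = 1`,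
`q (π0 β1 + π1 β0) = π0 q β1 + π1 q β0 - π1 π0 q (β1 - β0)`.
This collapses it to `-q (π0 β1 + π1 β0) / (4 π1 π0)`, which is `≤ 0` because `Σ` is positive.
-/

theorem Matrix.dotProduct_mulVec_smul_add_smul {R n : Type*} [CommRing R] [Fintype n]
    {S : Matrix n n R} (hS : S.IsSymm) {a b : R} (hab : a + b = 1) (v w : n → R) :
    (b • v + a • w) ⬝ᵥ S *ᵥ (b • v + a • w)
      = b * (v ⬝ᵥ S *ᵥ v) + a * (w ⬝ᵥ S *ᵥ w) - a * b * ((v - w) ⬝ᵥ S *ᵥ (v - w)) := by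
  have hsymm : w ⬝ᵥ S *ᵥ v = v ⬝ᵥ S *ᵥ w := by
    rw [dotProduct_mulVec, ← mulVec_transpose, hS.eq, dotProduct_comm]
  have hb : b = 1 - a := by linear_combination hab
  simp only [mulVec_sub, mulVec_add, mulVec_smul, sub_dotProduct, dotProduct_sub,
    add_dotProduct, dotProduct_add, smul_dotProduct, dotProduct_smul, smul_eq_mul, hsymm, hb]
  ring

section Covariance

variable {Ω : Type*} [MeasurableSpace Ω] {μ : Measure Ω}

theorem cov_eq_covariance [IsProbabilityMeasure μ] {f g : Ω → ℝ} (hf : MemLp f 2 μ)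
    (hg : MemLp g 2 μ) :
    cov μ f g = cov[f, g; μ] :=
  (covariance_eq_sub hf hg).symm

variable [IsFiniteMeasure μ]

theorem variance_sub_sum_mul {ι : Type*} [Fintype ι] {X : ι → Ω → ℝ} {U : Ω → ℝ}
    (hX : ∀ i, MemLp (X i) 2 μ) (hU : MemLp U 2 μ) (β : ι → ℝ) :
    Var[fun ω => U ω - ∑ i, β i * X i ω; μ]
      = Var[U; μ] - 2 * β ⬝ᵥ (fun i => cov[X i, U; μ])
        + β ⬝ᵥ (of fun i j => cov[X i, X j; μ]) *ᵥ β := by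
  have hβX : ∀ i, MemLp (fun ω => β i * X i ω) 2 μ := fun i => (hX i).const_mul (β i)
  have hS : MemLp (fun ω => ∑ i, β i * X i ω) 2 μ := memLp_finsetSum _ fun i _ => hβX i
  have hcovU : cov[fun ω => ∑ i, β i * X i ω, U; μ] = β ⬝ᵥ fun i => cov[X i, U; μ] := by
    simp only [covariance_fun_sum_left hβX hU, covariance_const_mul_left, dotProduct]
  have hcovS : cov[fun ω => ∑ i, β i * X i ω, fun ω => ∑ i, β i * X i ω; μ]
      = β ⬝ᵥ (of fun i j => cov[X i, X j; μ]) *ᵥ β := by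
    simp only [covariance_fun_sum_fun_sum hβX hβX, covariance_const_mul_left,
      covariance_const_mul_right, dotProduct, mulVec, of_apply, Finset.mul_sum]
    exact Finset.sum_congr rfl fun i _ => Finset.sum_congr rfl fun j _ => by ring
  have hUS : MemLp (fun ω => U ω - ∑ i, β i * X i ω) 2 μ := hU.sub hS
  rw [← covariance_self hUS.aemeasurable, ← covariance_self hU.aemeasurable,
    covariance_fun_sub_fun_sub hU hS hU hS, covariance_comm U (fun ω => ∑ i, β i * X i ω),
    hcovU, hcovS]
  ring

theorem variance_sub_sum_mul_of_mulVec_eq {ι : Type*} [Fintype ι] {X : ι → Ω → ℝ} {U : Ω → ℝ}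
    (hX : ∀ i, MemLp (X i) 2 μ) (hU : MemLp U 2 μ) {β : ι → ℝ}
    (hβ : (of fun i j => cov[X i, X j; μ]) *ᵥ β = fun i => cov[X i, U; μ]) :
    Var[fun ω => U ω - ∑ i, β i * X i ω; μ]
      = Var[U; μ] - β ⬝ᵥ (of fun i j => cov[X i, X j; μ]) *ᵥ β := by
  rw [variance_sub_sum_mul hX hU, ← hβ]
  ring

end Covariance

/-- With Σ = Var(X) positive definite and βa = Σ⁻¹Cov(X,Ua),
σ̃²_cr,adj - σ̃²_cr = (1/(4π1))[Var(U1 - β1ᵀX) - Var(U1)]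
+ (1/(4π0))[Var(U0 - β0ᵀX) - Var(U0)] + ¼(β1-β0)ᵀΣ(β1-β0)
= -(1/(4π1π0))(π0β1 + π1β0)ᵀΣ(π0β1 + π1β0) ≤ 0. -/
theorem stmt_13 {Ω : Type*} [MeasurableSpace Ω] (μ : Measure Ω) [IsProbabilityMeasure μ]
    {p : ℕ} (X : Ω → Fin p → ℝ) (U0 U1 : Ω → ℝ)
    (hX : ∀ i, MemLp (fun ω => X ω i) 2 μ)
    (hU0 : MemLp U0 2 μ) (hU1 : MemLp U1 2 μ)
    (π1 : ℝ) (hπ1 : π1 ∈ Set.Ioo (0 : ℝ) 1) (π0 : ℝ) (hπ0 : π0 = 1 - π1)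
    (Sm : Matrix (Fin p) (Fin p) ℝ)
    (hSm : Sm = Matrix.of fun i j => cov μ (fun ω => X ω i) (fun ω => X ω j))
    (hpd : Sm.PosDef)
    (β0 β1 : Fin p → ℝ)
    (hβ0 : β0 = Sm⁻¹.mulVec fun i => cov μ (fun ω => X ω i) U0)
    (hβ1 : β1 = Sm⁻¹.mulVec fun i => cov μ (fun ω => X ω i) U1) :
    (1 / (4 * π1)) * (variance (fun ω => U1 ω - ∑ i, β1 i * X ω i) μ - variance U1 μ)
        + (1 / (4 * π0)) * (variance (fun ω => U0 ω - ∑ i, β0 i * X ω i) μ - variance U0 μ)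
        + (1 / 4) * ((β1 - β0) ⬝ᵥ Sm.mulVec (β1 - β0))
      = -(1 / (4 * π1 * π0)) * ((π0 • β1 + π1 • β0) ⬝ᵥ Sm.mulVec (π0 • β1 + π1 • β0))
    ∧ (1 / (4 * π1)) * (variance (fun ω => U1 ω - ∑ i, β1 i * X ω i) μ - variance U1 μ)
        + (1 / (4 * π0)) * (variance (fun ω => U0 ω - ∑ i, β0 i * X ω i) μ - variance U0 μ)
        + (1 / 4) * ((β1 - β0) ⬝ᵥ Sm.mulVec (β1 - β0)) ≤ 0 := by
  have hSm' : Sm = of fun i j => cov[fun ω => X ω i, fun ω => X ω j; μ] := by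
    rw [hSm]; ext i j; exact cov_eq_covariance (hX i) (hX j)
  have hdet : IsUnit Sm.det := hpd.det_pos.ne'.isUnit
  have hvar : ∀ {U : Ω → ℝ}, MemLp U 2 μ → ∀ {β : Fin p → ℝ},
      β = Sm⁻¹ *ᵥ (fun i => cov μ (fun ω => X ω i) U) →
      Var[fun ω => U ω - ∑ i, β i * X ω i; μ] = Var[U; μ] - β ⬝ᵥ Sm *ᵥ β := by
    intro U hU β hβ
    rw [hSm']
    refine variance_sub_sum_mul_of_mulVec_eq hX hU ?_
    rw [← hSm', hβ, mulVec_mulVec, mul_nonsing_inv _ hdet, one_mulVec]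
    exact funext fun i => cov_eq_covariance (hX i) hU
  have hπ1pos : 0 < π1 := hπ1.1
  have hπ0pos : 0 < π0 := by linarith [hπ1.2]
  have hquad := dotProduct_mulVec_smul_add_smul (isHermitian_iff_isSymm.mp hpd.isHermitian)
    (show π1 + π0 = 1 by linarith) β1 β0
  have heq : (1 / (4 * π1)) * (Var[fun ω => U1 ω - ∑ i, β1 i * X ω i; μ] - Var[U1; μ])
        + (1 / (4 * π0)) * (Var[fun ω => U0 ω - ∑ i, β0 i * X ω i; μ] - Var[U0; μ])
        + (1 / 4) * ((β1 - β0) ⬝ᵥ Sm *ᵥ (β1 - β0))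
      = -(1 / (4 * π1 * π0)) * ((π0 • β1 + π1 • β0) ⬝ᵥ Sm *ᵥ (π0 • β1 + π1 • β0)) := by
    rw [hvar hU1 hβ1, hvar hU0 hβ0, hquad]
    field_simp
    ring
  refine ⟨heq, heq ▸ ?_⟩
  have hnonneg : 0 ≤ (π0 • β1 + π1 • β0) ⬝ᵥ Sm *ᵥ (π0 • β1 + π1 • β0) := by
    simpa using hpd.posSemidef.dotProduct_mulVec_nonneg (π0 • β1 + π1 • β0)
  rw [neg_mul]
  exact neg_nonpos.mpr (mul_nonneg (by positivity) hnonneg)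
end
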